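/- arXiv:1602.09117 — 9 statements merged into one kernel-verified Lean document; each statement's English description precedes it below -/
import Mathlib

section
/- For all positive real numbers x₁, x₂, y₁, y₂ one has |log((x₁ + x₂)/(y₁ + y₂))| ≤ |log(x₁/y₁)| + |log(x₂/y₂)|. -/
/-- For all positive real numbers `x₁, x₂, y₁, y₂` one has
`|log((x₁ + x₂)/(y₁ + y₂))| ≤ |log(x₁/y₁)| + |log(x₂/y₂)|`. -/
theorem stmt_0 (x₁ x₂ y₁ y₂ : ℝ) (hx₁ : 0 < x₁) (hx₂ : 0 < x₂)
    (hy₁ : 0 < y₁) (hy₂ : 0 < y₂) :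
    |Real.log ((x₁ + x₂) / (y₁ + y₂))| ≤ |Real.log (x₁ / y₁)| + |Real.log (x₂ / y₂)| := by
  have hy : (0:ℝ) < y₁ + y₂ := by linarith
  set a := x₁ / y₁ with ha
  set b := x₂ / y₂ with hb
  have h1 : min a b * y₁ ≤ x₁ := by
    calc min a b * y₁ ≤ a * y₁ := by
          exact mul_le_mul_of_nonneg_right (min_le_left _ _) hy₁.le
      _ = x₁ := by rw [ha, div_mul_cancel₀ _ hy₁.ne']
  have h2 : min a b * y₂ ≤ x₂ := by
    calc min a b * y₂ ≤ b * y₂ := by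
          exact mul_le_mul_of_nonneg_right (min_le_right _ _) hy₂.le
      _ = x₂ := by rw [hb, div_mul_cancel₀ _ hy₂.ne']
  have h3 : x₁ ≤ max a b * y₁ := by
    calc x₁ = a * y₁ := by rw [ha, div_mul_cancel₀ _ hy₁.ne']
      _ ≤ max a b * y₁ := mul_le_mul_of_nonneg_right (le_max_left _ _) hy₁.le
  have h4 : x₂ ≤ max a b * y₂ := by
    calc x₂ = b * y₂ := by rw [hb, div_mul_cancel₀ _ hy₂.ne']
      _ ≤ max a b * y₂ := mul_le_mul_of_nonneg_right (le_max_right _ _) hy₂.le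
  have hlo : min a b ≤ (x₁ + x₂) / (y₁ + y₂) := by
    rw [le_div_iff₀ hy]; nlinarith
  have hhi : (x₁ + x₂) / (y₁ + y₂) ≤ max a b := by
    rw [div_le_iff₀ hy]; nlinarith
  have hpa : 0 < a := div_pos hx₁ hy₁
  have hpb : 0 < b := div_pos hx₂ hy₂
  have hlog1 : Real.log (min a b) ≤ Real.log ((x₁ + x₂) / (y₁ + y₂)) :=
    Real.log_le_log (lt_min hpa hpb) hlo
  have hlog2 : Real.log ((x₁ + x₂) / (y₁ + y₂)) ≤ Real.log (max a b) :=
    Real.log_le_log (div_pos (by linarith) hy) hhi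
  have key : |Real.log ((x₁ + x₂) / (y₁ + y₂))| ≤
      max |Real.log (min a b)| |Real.log (max a b)| :=
    abs_le_max_abs_abs hlog1 hlog2
  have hmm : min a b = a ∧ max a b = b ∨ min a b = b ∧ max a b = a := by
    rcases le_total a b with h | h
    · left; exact ⟨min_eq_left h, max_eq_right h⟩
    · right; exact ⟨min_eq_right h, max_eq_left h⟩
  rcases hmm with ⟨h5, h6⟩ | ⟨h5, h6⟩ <;> rw [h5, h6] at key <;>
    [exact key.trans (max_le (le_add_of_nonneg_right (abs_nonneg _))
      (le_add_of_nonneg_left (abs_nonneg _)));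
     exact key.trans (max_le (le_add_of_nonneg_left (abs_nonneg _))
      (le_add_of_nonneg_right (abs_nonneg _)))]
end

section
/- Let l ≥ 2 be an integer and let z : ℤ → ℂ satisfy z(k+1) = l·z(k) − z(k−1) for all k ∈ ℤ. Suppose that for some i ∈ ℤ we have z(i−1) ≠ 0 and Im(z(i)/z(i−1)) > 0. Then for every j ∈ ℤ: z(i+j−1) ≠ 0, Im(z(i+j)/z(i+j−1)) > 0, and z(i+j)/z(i+j−1) = (p·w + q)/(r·w + s), where w = z(i)/z(i−1) and [[p, q], [r, s]] is the j-th power α_l^j of the matrix α_l. -/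
/-!
The recurrence says that the vector `(z k, z (k - 1))` is moved one step forward by `α_l`, so
`(z (i + j), z (i + j - 1)) = α_l ^ j • (z i, z (i - 1))`. Dividing the two coordinates by
`z (i - 1)` turns this into the Möbius action of `α_l ^ j ∈ SL(2, ℤ)` on `w`, which preserves `ℍ`
and never has a vanishing denominator there.
-/

open Matrix UpperHalfPlane
open scoped MatrixGroups

theorem MulAction.apply_add_eq_zpow_smul {G X : Type*} [Group G] [MulAction G X] (g : G)
    {f : ℤ → X} (hf : ∀ k, f (k + 1) = g • f k) (i j : ℤ) : f (i + j) = g ^ j • f i := by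
  induction j using Int.induction_on with
  | zero => simp
  | succ n ih => rw [← add_assoc, hf, ih, ← mul_smul, ← _root_.zpow_one_add, add_comm 1]
  | pred n ih =>
    have h := hf (i + (-n - 1))
    rw [show i + (-(n : ℤ) - 1) + 1 = i + -n by ring, ih, ← inv_smul_eq_iff] at h
    rw [← h, smul_smul, ← _root_.zpow_neg_one, ← _root_.zpow_add, neg_add_eq_sub]

section

variable {R : Type*} [CommRing R] {l : ℤ} {z : ℤ → R} {α : SL(2, ℤ)}

theorem pair_succ_eq_smul (hrec : ∀ k : ℤ, z (k + 1) = (l : R) * z k - z (k - 1))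
    (hα : (α : Matrix (Fin 2) (Fin 2) ℤ) = !![l, -1; 1, 0]) (k : ℤ) :
    ![z (k + 1), z (k + 1 - 1)] =
      SpecialLinearGroup.map (Int.castRingHom R) α • ![z k, z (k - 1)] := by
  ext m
  rw [Matrix.SpecialLinearGroup.smul_def]
  fin_cases m <;> simp [hα, hrec, mulVec, dotProduct, Fin.sum_univ_two, sub_eq_add_neg]

theorem pair_add_eq_zpow_smul (hrec : ∀ k : ℤ, z (k + 1) = (l : R) * z k - z (k - 1))
    (hα : (α : Matrix (Fin 2) (Fin 2) ℤ) = !![l, -1; 1, 0]) (i j : ℤ) :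
    ![z (i + j), z (i + j - 1)] =
      SpecialLinearGroup.map (Int.castRingHom R) (α ^ j) • ![z i, z (i - 1)] := by
  rw [map_zpow]
  exact MulAction.apply_add_eq_zpow_smul _ (f := fun k ↦ ![z k, z (k - 1)])
    (pair_succ_eq_smul hrec hα) i j

theorem apply_add_eq_zpow_entries (hrec : ∀ k : ℤ, z (k + 1) = (l : R) * z k - z (k - 1))
    (hα : (α : Matrix (Fin 2) (Fin 2) ℤ) = !![l, -1; 1, 0]) (i j : ℤ) :
    z (i + j) = ((α ^ j) 0 0 : R) * z i + ((α ^ j) 0 1 : R) * z (i - 1) ∧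
      z (i + j - 1) = ((α ^ j) 1 0 : R) * z i + ((α ^ j) 1 1 : R) * z (i - 1) := by
  have h := congrFun (pair_add_eq_zpow_smul hrec hα i j)
  simp only [Matrix.SpecialLinearGroup.smul_def] at h
  exact ⟨by simpa [-map_zpow, mulVec, dotProduct, Fin.sum_univ_two] using h 0,
    by simpa [-map_zpow, mulVec, dotProduct, Fin.sum_univ_two] using h 1⟩

end

theorem ModularGroup.denom_ne_zero_and_im_moebius_pos (g : SL(2, ℤ)) (τ : ℍ) :
    (g 1 0 * (τ : ℂ) + g 1 1) ≠ 0 ∧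
      0 < ((g 0 0 * (τ : ℂ) + g 0 1) / (g 1 0 * (τ : ℂ) + g 1 1)).im := by
  refine ⟨by simpa [ModularGroup.denom_apply] using denom_ne_zero g τ, ?_⟩
  have h := (g • τ).im_pos
  rw [← coe_im, coe_specialLinearGroup_apply] at h
  simpa using h

theorem div_eq_moebius_div {K : Type*} [Field K] {a b c d x y x' y' : K} (hy : y ≠ 0)
    (hx' : x' = a * x + b * y) (hy' : y' = c * x + d * y) (hden : c * (x / y) + d ≠ 0) :
    y' ≠ 0 ∧ x' / y' = (a * (x / y) + b) / (c * (x / y) + d) := by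
  have hx'y : x' = (a * (x / y) + b) * y := by rw [hx']; field_simp
  have hy'y : y' = (c * (x / y) + d) * y := by rw [hy']; field_simp
  rw [hx'y, hy'y, mul_div_mul_right _ _ hy]
  exact ⟨mul_ne_zero hden hy, rfl⟩

theorem stmt_2_general (l : ℤ) (z : ℤ → ℂ)
    (hrec : ∀ k : ℤ, z (k + 1) = (l : ℂ) * z k - z (k - 1))
    (i : ℤ) (h0 : z (i - 1) ≠ 0) (him : 0 < (z i / z (i - 1)).im)
    (α : Matrix.SpecialLinearGroup (Fin 2) ℤ)
    (hα : (α : Matrix (Fin 2) (Fin 2) ℤ) = !![l, -1; 1, 0]) (j : ℤ) :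
    z (i + j - 1) ≠ 0 ∧ 0 < (z (i + j) / z (i + j - 1)).im ∧
      z (i + j) / z (i + j - 1) =
        ((((α ^ j : Matrix.SpecialLinearGroup (Fin 2) ℤ) :
              Matrix (Fin 2) (Fin 2) ℤ) 0 0 : ℂ) * (z i / z (i - 1)) +
            (((α ^ j : Matrix.SpecialLinearGroup (Fin 2) ℤ) :
              Matrix (Fin 2) (Fin 2) ℤ) 0 1 : ℂ)) /
          ((((α ^ j : Matrix.SpecialLinearGroup (Fin 2) ℤ) :
              Matrix (Fin 2) (Fin 2) ℤ) 1 0 : ℂ) * (z i / z (i - 1)) +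
            (((α ^ j : Matrix.SpecialLinearGroup (Fin 2) ℤ) :
              Matrix (Fin 2) (Fin 2) ℤ) 1 1 : ℂ)) := by
  obtain ⟨hnum, hden⟩ := apply_add_eq_zpow_entries hrec hα i j
  obtain ⟨hden_ne, hmoeb_im⟩ := ModularGroup.denom_ne_zero_and_im_moebius_pos (α ^ j) ⟨_, him⟩
  obtain ⟨hne, hquot⟩ := div_eq_moebius_div h0 hnum hden hden_ne
  exact ⟨hne, hquot ▸ hmoeb_im, hquot⟩

/-- Let `l ≥ 2` be an integer and `z : ℤ → ℂ` satisfy `z(k+1) = l·z(k) − z(k−1)`.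
If `z(i−1) ≠ 0` and `Im(z(i)/z(i−1)) > 0`, then for every `j : ℤ` the quotient
`z(i+j)/z(i+j−1)` lies in the upper half-plane and equals the Möbius transform of
`w = z(i)/z(i−1)` by `α_l^j`, where `α_l = [[l, −1], [1, 0]] ∈ SL(2,ℤ)`. -/
theorem stmt_2 (l : ℤ) (hl : 2 ≤ l) (z : ℤ → ℂ)
    (hrec : ∀ k : ℤ, z (k + 1) = (l : ℂ) * z k - z (k - 1))
    (i : ℤ) (h0 : z (i - 1) ≠ 0) (him : 0 < (z i / z (i - 1)).im)
    (α : Matrix.SpecialLinearGroup (Fin 2) ℤ)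
    (hα : (α : Matrix (Fin 2) (Fin 2) ℤ) = !![l, -1; 1, 0]) (j : ℤ) :
    z (i + j - 1) ≠ 0 ∧ 0 < (z (i + j) / z (i + j - 1)).im ∧
      z (i + j) / z (i + j - 1) =
        ((((α ^ j : Matrix.SpecialLinearGroup (Fin 2) ℤ) :
              Matrix (Fin 2) (Fin 2) ℤ) 0 0 : ℂ) * (z i / z (i - 1)) +
            (((α ^ j : Matrix.SpecialLinearGroup (Fin 2) ℤ) :
              Matrix (Fin 2) (Fin 2) ℤ) 0 1 : ℂ)) /
          ((((α ^ j : Matrix.SpecialLinearGroup (Fin 2) ℤ) :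
              Matrix (Fin 2) (Fin 2) ℤ) 1 0 : ℂ) * (z i / z (i - 1)) +
            (((α ^ j : Matrix.SpecialLinearGroup (Fin 2) ℤ) :
              Matrix (Fin 2) (Fin 2) ℤ) 1 1 : ℂ)) :=
  stmt_2_general l z hrec i h0 him α hα j
end

section
/- Let y ∈ (−1, 1) be real. Then the function t ↦ F(1, y, t) − F(1, y, t⁻¹) is strictly increasing on (0, ∞); more precisely, at every t > 0 this function has derivative 2·√(1 − y²)/(t² + 1 − 2·t·y). -/
/-- `F(x, y, t) = arccos((x·y − t)/√(t² + x² − 2·t·x·y))`. -/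
noncomputable def F (x y t : ℝ) : ℝ :=
  Real.arccos ((x * y - t) / Real.sqrt (t ^ 2 + x ^ 2 - 2 * t * x * y))

/-!
With `s = √(1 - y²)` one has `t² + 1 - 2ty = (t - y)² + s²`, so `F(1, y, t)` is the angle of a
right triangle with legs `y - t` and `s`, namely `π/2 + arctan ((t - y) / s)`. Its derivative is
`s / (t² + 1 - 2ty)`, and by the chain rule the term `-F(1, y, t⁻¹)` contributes exactly the same
amount, which is positive.
-/

open Real

lemma one_sub_sq_pos_of_mem_Ioo {y : ℝ} (hy : y ∈ Set.Ioo (-1 : ℝ) 1) : 0 < 1 - y ^ 2 := by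
  nlinarith [hy.1, hy.2]

lemma sq_add_one_sub_two_mul_pos {y : ℝ} (hy : y ∈ Set.Ioo (-1 : ℝ) 1) (t : ℝ) :
    0 < t ^ 2 + 1 - 2 * t * y := by
  nlinarith [sq_nonneg (t - y), one_sub_sq_pos_of_mem_Ioo hy]

lemma arccos_div_sqrt_sq_add_sq (u : ℝ) {s : ℝ} (hs : 0 < s) :
    arccos (u / √(u ^ 2 + s ^ 2)) = π / 2 - arctan (u / s) := by
  have hsqrt : √(u ^ 2 + s ^ 2) = s * √(1 + (u / s) ^ 2) := by
    rw [← sqrt_sq hs.le, ← sqrt_mul (sq_nonneg s), sqrt_sq hs.le]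
    congr 1
    field_simp
    ring
  rw [arccos_eq_pi_div_two_sub_arcsin, arctan_eq_arcsin, hsqrt, ← div_div]

lemma F_one_eq {y : ℝ} (hy : y ∈ Set.Ioo (-1 : ℝ) 1) (t : ℝ) :
    F 1 y t = π / 2 + arctan ((t - y) / √(1 - y ^ 2)) := by
  have hy2 := one_sub_sq_pos_of_mem_Ioo hy
  have hD : t ^ 2 + 1 ^ 2 - 2 * t * 1 * y = (1 * y - t) ^ 2 + √(1 - y ^ 2) ^ 2 := by
    rw [sq_sqrt hy2.le]
    ring
  rw [F, hD, arccos_div_sqrt_sq_add_sq _ (sqrt_pos.2 hy2), one_mul, ← neg_sub t, neg_div,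
    arctan_neg, sub_neg_eq_add]

lemma hasDerivAt_F_one {y : ℝ} (hy : y ∈ Set.Ioo (-1 : ℝ) 1) (t : ℝ) :
    HasDerivAt (F 1 y) (√(1 - y ^ 2) / (t ^ 2 + 1 - 2 * t * y)) t := by
  have hy2 := one_sub_sq_pos_of_mem_Ioo hy
  have hD := (sq_add_one_sub_two_mul_pos hy t).ne'
  rw [show F 1 y = _ from funext (F_one_eq hy)]
  refine (((hasDerivAt_id' t).sub_const y).div_const √(1 - y ^ 2)).arctan.const_add (π / 2)
    |>.congr_deriv ?_
  have h1 : 1 + ((t - y) / √(1 - y ^ 2)) ^ 2 = (t ^ 2 + 1 - 2 * t * y) / (1 - y ^ 2) := by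
    rw [div_pow, sq_sqrt hy2.le]
    field_simp
    ring
  rw [h1]
  field_simp
  rw [sq_sqrt hy2.le]

/-- For `y ∈ (−1, 1)`, the function `t ↦ F(1, y, t) − F(1, y, t⁻¹)` is strictly
increasing on `(0, ∞)`, and at every `t > 0` its derivative is
`2·√(1 − y²)/(t² + 1 − 2·t·y)`. -/
theorem stmt_3 (y : ℝ) (hy : y ∈ Set.Ioo (-1 : ℝ) 1) :
    StrictMonoOn (fun t : ℝ => F 1 y t - F 1 y t⁻¹) (Set.Ioi (0 : ℝ)) ∧
    ∀ t : ℝ, 0 < t →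
      HasDerivAt (fun t : ℝ => F 1 y t - F 1 y t⁻¹)
        (2 * Real.sqrt (1 - y ^ 2) / (t ^ 2 + 1 - 2 * t * y)) t := by
  have hderiv : ∀ t : ℝ, 0 < t → HasDerivAt (fun t : ℝ => F 1 y t - F 1 y t⁻¹)
      (2 * √(1 - y ^ 2) / (t ^ 2 + 1 - 2 * t * y)) t := by
    intro t ht
    refine ((hasDerivAt_F_one hy t).sub
      ((hasDerivAt_F_one hy t⁻¹).comp t (hasDerivAt_inv ht.ne'))).congr_deriv ?_
    have := sq_add_one_sub_two_mul_pos hy t⁻¹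
    field_simp
    ring
  refine ⟨strictMonoOn_of_deriv_pos (convex_Ioi 0)
    (fun t ht => (hderiv t ht).continuousAt.continuousWithinAt) fun t ht => ?_, hderiv⟩
  rw [interior_Ioi] at ht
  rw [(hderiv t ht).deriv]
  exact div_pos (mul_pos two_pos (sqrt_pos.2 (one_sub_sq_pos_of_mem_Ioo hy)))
    (sq_add_one_sub_two_mul_pos hy t)
end

section
/- Let l ≥ 2 be an integer. Then: (i) for every z ∈ ℍ there exists j ∈ ℤ with z ∈ α_l^j • F_l; (ii) for every nonzero j ∈ ℤ, (α_l^j • F_l°) ∩ F_l° = ∅. (Thus F_l is a fundamental domain in ℍ for the cyclic subgroup generated by α_l.) -/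
/-- The Möbius transformation of a `2 × 2` integer matrix acting on complex numbers:
`A • z = (A₀₀·z + A₀₁)/(A₁₀·z + A₁₁)`. -/
noncomputable def moeb (A : Matrix (Fin 2) (Fin 2) ℤ) (z : ℂ) : ℂ :=
  ((A 0 0 : ℂ) * z + (A 0 1 : ℂ)) / ((A 1 0 : ℂ) * z + (A 1 1 : ℂ))

/-!
For `l ≥ 3` the matrix `α_l` is hyperbolic, with real fixed points `a > a⁻¹` where
`a + a⁻¹ = l`, and it multiplies `(z - a) / (z - a⁻¹)` by `a⁻²`; for `l = 2` it is parabolic with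
fixed point `1`, and it translates `1 / (1 - z)` by `-1`. Either way there is `φ : ℍ → ℝ` with
`φ (α • z) = φ z - 1`, positive exactly to the left of the line `Re z = l / 2`. Since `α` maps the
closed exterior of the circle `Re z = (l/2)|z|²` onto the closed half-plane `Re z ≥ l / 2`, this
gives `F_l = {0 ≤ φ ≤ 1}` and `F_l° = {0 < φ < 1}`, and both claims reduce to the action of `ℤ`
on `ℝ` by translations.
-/

open Set
open scoped UpperHalfPlane MatrixGroups

section Translation

variable {G X : Type*} [Group G] [MulAction G X] {g : G} {φ : X → ℝ}

theorem apply_zpow_smul_eq_sub (hφ : ∀ x, φ (g • x) = φ x - 1) (j : ℤ) (x : X) :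
    φ (g ^ j • x) = φ x - j := by
  induction j using Int.induction_on generalizing x with
  | zero => simp
  | succ j ih => rw [zpow_add_one, mul_smul, ih, hφ]; push_cast; ring
  | pred j ih =>
    have hinv : φ (g⁻¹ • x) = φ x + 1 := by
      have h := hφ (g⁻¹ • x)
      rw [smul_inv_smul] at h
      linarith
    rw [zpow_sub_one, mul_smul, ih, hinv]; push_cast; ring

theorem exists_eq_zpow_smul_of_mem_Ico (hφ : ∀ x, φ (g • x) = φ x - 1) (x : X) :
    ∃ j : ℤ, ∃ w, φ w ∈ Ico 0 1 ∧ x = g ^ j • w := by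
  refine ⟨-⌊φ x⌋, g ^ ⌊φ x⌋ • x, ?_, by
    rw [smul_smul, ← zpow_add, neg_add_cancel, zpow_zero, one_smul]⟩
  rw [apply_zpow_smul_eq_sub hφ, ← Int.fract]
  exact ⟨Int.fract_nonneg _, Int.fract_lt_one _⟩

theorem eq_zero_of_mem_Ioo_of_zpow_smul_mem_Ioo (hφ : ∀ x, φ (g • x) = φ x - 1) {j : ℤ} {w : X}
    (hw : φ w ∈ Ioo 0 1) (hjw : φ (g ^ j • w) ∈ Ioo 0 1) : j = 0 := by
  rw [apply_zpow_smul_eq_sub hφ] at hjw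
  have h1 : j < 1 := by exact_mod_cast (by linarith [hw.2, hjw.1] : (j : ℝ) < 1)
  have h2 : -1 < j := by exact_mod_cast (by linarith [hw.1, hjw.2] : (-1 : ℝ) < j)
  omega

end Translation

theorem moeb_eq_coe_smul (g : SL(2, ℤ)) (τ : ℍ) : moeb g τ = ↑(g • τ) := by
  rw [UpperHalfPlane.coe_specialLinearGroup_apply]; simp [moeb]

open UpperHalfPlane Complex

def alpha (l : ℤ) : SL(2, ℤ) := ⟨!![l, -1; 1, 0], by simp [Matrix.det_fin_two]⟩

theorem coe_alpha_smul (l : ℤ) (τ : ℍ) : (↑(alpha l • τ) : ℂ) = l - (τ : ℂ)⁻¹ := by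
  rw [coe_specialLinearGroup_apply]
  simp [alpha, add_div, τ.ne_zero, sub_eq_add_neg, neg_div]

theorem re_alpha_smul (l : ℤ) (τ : ℍ) : (alpha l • τ).re = l - τ.re / normSq τ := by
  rw [UpperHalfPlane.re, coe_alpha_smul, sub_re, inv_re, intCast_re]; rfl

theorem re_le_iff_le_re_alpha_smul (l : ℤ) (τ : ℍ) :
    τ.re ≤ l / 2 * ‖(τ : ℂ)‖ ^ 2 ↔ l / 2 ≤ (alpha l • τ).re := by
  rw [re_alpha_smul, Complex.sq_norm, le_sub_comm, div_le_iff₀ (normSq_pos.2 τ.ne_zero)]; ring_nf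

theorem re_lt_iff_lt_re_alpha_smul (l : ℤ) (τ : ℍ) :
    τ.re < l / 2 * ‖(τ : ℂ)‖ ^ 2 ↔ l / 2 < (alpha l • τ).re := by
  rw [re_alpha_smul, Complex.sq_norm, lt_sub_comm, div_lt_iff₀ (normSq_pos.2 τ.ne_zero)]; ring_nf

structure IsTranslationCoordinate (l : ℤ) (φ : ℍ → ℝ) : Prop where
  apply_alpha_smul : ∀ τ, φ (alpha l • τ) = φ τ - 1
  nonneg_iff : ∀ τ : ℍ, 0 ≤ φ τ ↔ τ.re ≤ l / 2
  pos_iff : ∀ τ : ℍ, 0 < φ τ ↔ τ.re < l / 2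

namespace IsTranslationCoordinate

variable {l : ℤ} {φ : ℍ → ℝ}

theorem le_one_iff (hφ : IsTranslationCoordinate l φ) (τ : ℍ) :
    φ τ ≤ 1 ↔ τ.re ≤ l / 2 * ‖(τ : ℂ)‖ ^ 2 := by
  rw [re_le_iff_le_re_alpha_smul, ← sub_nonpos, ← hφ.apply_alpha_smul, ← not_lt, hφ.pos_iff,
    not_lt]

theorem lt_one_iff (hφ : IsTranslationCoordinate l φ) (τ : ℍ) :
    φ τ < 1 ↔ τ.re < l / 2 * ‖(τ : ℂ)‖ ^ 2 := by
  rw [re_lt_iff_lt_re_alpha_smul, ← sub_neg, ← hφ.apply_alpha_smul, ← not_le, hφ.nonneg_iff,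
    not_le]

theorem mem_Icc_iff (hφ : IsTranslationCoordinate l φ) (τ : ℍ) :
    φ τ ∈ Icc 0 1 ↔ τ.re ≤ l / 2 * ‖(τ : ℂ)‖ ^ 2 ∧ τ.re ≤ l / 2 := by
  rw [mem_Icc, hφ.nonneg_iff, hφ.le_one_iff, and_comm]

theorem mem_Ioo_iff (hφ : IsTranslationCoordinate l φ) (τ : ℍ) :
    φ τ ∈ Ioo 0 1 ↔ τ.re < l / 2 * ‖(τ : ℂ)‖ ^ 2 ∧ τ.re < l / 2 := by
  rw [mem_Ioo, hφ.pos_iff, hφ.lt_one_iff, and_comm]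

end IsTranslationCoordinate

theorem isTranslationCoordinate_two :
    IsTranslationCoordinate 2 fun τ => ((1 - (τ : ℂ))⁻¹).re := by
  have hne (τ : ℍ) : 1 - (τ : ℂ) ≠ 0 := sub_ne_zero.2 (mod_cast (τ.ne_ofReal 1).symm)
  have hre (τ : ℍ) : ((1 - (τ : ℂ))⁻¹).re = (1 - τ.re) / normSq (1 - (τ : ℂ)) := by
    rw [inv_re, sub_re, one_re]; rfl
  refine ⟨fun τ => ?_, fun τ => ?_, fun τ => ?_⟩
  · have h : (1 - ((2 : ℤ) - (τ : ℂ)⁻¹))⁻¹ = (1 - (τ : ℂ))⁻¹ - 1 := by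
      rw [show 1 - ((2 : ℤ) - (τ : ℂ)⁻¹) = (1 - τ) / τ by
          push_cast; field_simp [τ.ne_zero]; ring,
        inv_div, eq_sub_iff_add_eq, div_add_one (hne τ), add_sub_cancel, one_div]
    simp only [coe_alpha_smul, h, sub_re, one_re]
  · rw [hre, le_div_iff₀ (normSq_pos.2 (hne τ))]; norm_num
  · rw [hre, lt_div_iff₀ (normSq_pos.2 (hne τ))]; norm_num

theorem normSq_sub_ofReal_sub_normSq_sub_ofReal (z : ℂ) (a b : ℝ) :
    normSq (z - a) - normSq (z - b) = (a - b) * (a + b - 2 * z.re) := by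
  simp only [normSq_apply, sub_re, sub_im, ofReal_re, ofReal_im]; ring

theorem normSq_sub_ofReal_le_iff {a b : ℝ} (hba : b < a) (z : ℂ) :
    normSq (z - b) ≤ normSq (z - a) ↔ z.re ≤ (a + b) / 2 := by
  rw [← sub_nonneg, normSq_sub_ofReal_sub_normSq_sub_ofReal,
    mul_nonneg_iff_of_pos_left (sub_pos.2 hba)]
  constructor <;> intro h <;> linarith

theorem normSq_sub_ofReal_lt_iff {a b : ℝ} (hba : b < a) (z : ℂ) :
    normSq (z - b) < normSq (z - a) ↔ z.re < (a + b) / 2 := by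
  rw [← sub_pos, normSq_sub_ofReal_sub_normSq_sub_ofReal, mul_pos_iff_of_pos_left (sub_pos.2 hba)]
  constructor <;> intro h <;> linarith

theorem alpha_smul_sub_div_alpha_smul_sub {l : ℤ} {a : ℝ} (ha : a ≠ 0) (hal : a + a⁻¹ = l)
    (τ : ℍ) : ((alpha l • τ : ℍ) - a : ℂ) / ((alpha l • τ : ℍ) - (a⁻¹ : ℝ)) =
      ((τ : ℂ) - a) / (τ - (a⁻¹ : ℝ)) / (a : ℂ) ^ 2 := by
  have haC : (a : ℂ) ≠ 0 := mod_cast ha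
  have hτa : (τ : ℂ) - (a⁻¹ : ℝ) ≠ 0 := sub_ne_zero.2 (τ.ne_ofReal _)
  have hατa : ((alpha l • τ : ℍ) : ℂ) - (a⁻¹ : ℝ) ≠ 0 :=
    sub_ne_zero.2 ((alpha l • τ).ne_ofReal _)
  have hlC : (l : ℂ) = a + (a⁻¹ : ℝ) := mod_cast hal.symm
  rw [div_div, div_eq_div_iff hατa (mul_ne_zero hτa (pow_ne_zero 2 haC)), coe_alpha_smul, hlC]
  push_cast
  field_simp [τ.ne_zero]
  ring

theorem isTranslationCoordinate_of_add_inv_eq {l : ℤ} {a : ℝ} (ha : 1 < a)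
    (hal : a + a⁻¹ = l) :
    IsTranslationCoordinate l fun τ => Real.logb (a ^ 4) (normSq ((τ - a) / (τ - (a⁻¹ : ℝ)))) := by
  have hN (τ : ℍ) (r : ℝ) : 0 < normSq ((τ : ℂ) - r) :=
    normSq_pos.2 (sub_ne_zero.2 (τ.ne_ofReal r))
  have hb : 1 < a ^ 4 := one_lt_pow₀ ha (by norm_num)
  have hinv : a⁻¹ < a := (inv_lt_one_of_one_lt₀ ha).trans ha
  refine ⟨fun τ => ?_, fun τ => ?_, fun τ => ?_⟩
  · have hpos : 0 < normSq (((τ : ℂ) - a) / (τ - (a⁻¹ : ℝ))) := by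
      rw [map_div₀]; exact div_pos (hN τ a) (hN τ _)
    simp only [alpha_smul_sub_div_alpha_smul_sub (by positivity) hal τ, map_div₀ normSq _ (_ ^ 2),
      map_pow, normSq_ofReal]
    rw [show (a * a) ^ 2 = a ^ 4 by ring, Real.logb_div hpos.ne' (by positivity),
      Real.logb_self_eq_one hb]
  · rw [map_div₀, Real.logb_nonneg_iff hb (div_pos (hN τ a) (hN τ _)), one_le_div₀ (hN τ _),
      normSq_sub_ofReal_le_iff hinv, hal]
    rfl
  · rw [map_div₀, Real.logb_pos_iff hb (div_pos (hN τ a) (hN τ _)), one_lt_div (hN τ _),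
      normSq_sub_ofReal_lt_iff hinv, hal]
    rfl

theorem exists_one_lt_add_inv_eq {l : ℝ} (hl : 2 < l) : ∃ a : ℝ, 1 < a ∧ a + a⁻¹ = l := by
  set d := √(l ^ 2 - 4)
  have hd : d ^ 2 = l ^ 2 - 4 := Real.sq_sqrt (by nlinarith)
  have hd0 : 0 ≤ d := Real.sqrt_nonneg _
  refine ⟨(l + d) / 2, by linarith, ?_⟩
  rw [inv_eq_of_mul_eq_one_right (b := (l - d) / 2) (by linear_combination -hd / 4)]
  ring

theorem exists_isTranslationCoordinate {l : ℤ} (hl : 2 ≤ l) :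
    ∃ φ, IsTranslationCoordinate l φ := by
  obtain rfl | hl := hl.eq_or_lt
  · exact ⟨_, isTranslationCoordinate_two⟩
  · obtain ⟨a, ha, hal⟩ := exists_one_lt_add_inv_eq (l := l) (mod_cast hl)
    exact ⟨_, isTranslationCoordinate_of_add_inv_eq ha hal⟩

/-- Let `l ≥ 2` be an integer and `α_l = [[l, −1], [1, 0]] ∈ SL(2,ℤ)`.  Let
`F_l = {z ∈ ℍ : Re z ≤ (l/2)·|z|² and Re z ≤ l/2}` and
`F_l° = {z ∈ ℍ : Re z < (l/2)·|z|² and Re z < l/2}`.  Then: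
(i) every `z ∈ ℍ` lies in `α_l^j • F_l` for some `j : ℤ`;
(ii) for every nonzero `j : ℤ`, `(α_l^j • F_l°) ∩ F_l° = ∅`.
Thus `F_l` is a fundamental domain in `ℍ` for the cyclic subgroup `⟨α_l⟩`. -/
theorem stmt_5 (l : ℤ) (hl : 2 ≤ l)
    (α : Matrix.SpecialLinearGroup (Fin 2) ℤ)
    (hα : (α : Matrix (Fin 2) (Fin 2) ℤ) = !![l, -1; 1, 0])
    (Fl Flo : Set ℂ)
    (hFl : Fl = {z : ℂ | 0 < z.im ∧ z.re ≤ (l : ℝ) / 2 * ‖z‖ ^ 2 ∧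
      z.re ≤ (l : ℝ) / 2})
    (hFlo : Flo = {z : ℂ | 0 < z.im ∧ z.re < (l : ℝ) / 2 * ‖z‖ ^ 2 ∧
      z.re < (l : ℝ) / 2}) :
    (∀ z : ℂ, 0 < z.im → ∃ j : ℤ, ∃ w ∈ Fl,
      z = moeb ((α ^ j : Matrix.SpecialLinearGroup (Fin 2) ℤ) : Matrix (Fin 2) (Fin 2) ℤ) w) ∧
    (∀ j : ℤ, j ≠ 0 → ∀ w ∈ Flo,
      moeb ((α ^ j : Matrix.SpecialLinearGroup (Fin 2) ℤ) : Matrix (Fin 2) (Fin 2) ℤ) w ∉ Flo) := by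
  obtain rfl : α = alpha l := Subtype.ext hα
  obtain ⟨φ, hφ⟩ := exists_isTranslationCoordinate hl
  subst hFl hFlo
  refine ⟨fun z hz => ?_, fun j hj w hw hjw => ?_⟩
  · obtain ⟨j, w, hw, hzw⟩ := exists_eq_zpow_smul_of_mem_Ico hφ.apply_alpha_smul ⟨z, hz⟩
    refine ⟨j, w, ⟨w.im_pos, (hφ.mem_Icc_iff w).1 (Ico_subset_Icc_self hw)⟩, ?_⟩
    rw [moeb_eq_coe_smul, ← hzw]
  · lift w to ℍ using hw.1
    rw [moeb_eq_coe_smul] at hjw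
    exact hj (eq_zero_of_mem_Ioo_of_zpow_smul_mem_Ioo hφ.apply_alpha_smul
      ((hφ.mem_Ioo_iff w).2 hw.2) ((hφ.mem_Ioo_iff _).2 hjw.2))
end

section
/- Let a > 1 be a real number and define β(z) = (a²·z + 1)/(a·(z + 1)) for complex z. If z ∈ ℂ satisfies Im z > 0 and |z| = a⁻², then β(a²·z)/β(z) is a positive real number, i.e. there exists r > 0 with β(a²·z) = r·β(z). -/
/-!
Put `u = a²z`, a point of the upper unit half-circle. On the unit circle `u * conj u = 1` turns
`(c u + 1)(u + c)` into `u * normSq (u + c)` for every real `c`; for `c = a²` and `c = 1`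
this makes
`β u / β z = (a²u + 1)(u + a²) / (a²(u + 1)²) = normSq (u + a²) / (a² normSq (u + 1))`
a positive real.
-/

namespace Complex

open ComplexConjugate

theorem mul_add_one_mul_add_eq_mul_normSq {u : ℂ} (hu : ‖u‖ = 1) (c : ℝ) :
    (c * u + 1) * (u + c) = u * normSq (u + c) := by
  have hconj : u * conj u = 1 := by
    rw [mul_conj, normSq_eq_norm_sq, hu]; norm_num
  rw [normSq_eq_conj_mul_self, map_add, conj_ofReal]
  linear_combination (-(u + c)) * hconj

theorem mul_add_one_div_add_one_eq_normSq_div_mul {u : ℂ} (hu : ‖u‖ = 1) {c : ℝ}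
    (hu1 : u + 1 ≠ 0) (huc : u + c ≠ 0) :
    (c * u + 1) / (u + 1) = (normSq (u + c) / normSq (u + 1) : ℝ) * ((u + 1) / (u + c)) := by
  have h₁ := mul_add_one_mul_add_eq_mul_normSq hu c
  have h₂ := mul_add_one_mul_add_eq_mul_normSq hu 1
  rw [ofReal_one, one_mul] at h₂
  have hN : (normSq (u + 1) : ℂ) ≠ 0 := ofReal_ne_zero.2 (normSq_pos.2 hu1).ne'
  push_cast
  field_simp
  linear_combination (normSq (u + 1) : ℂ) * h₁ - (normSq (u + c) : ℂ) * h₂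

theorem add_ofReal_ne_zero_of_im_pos {u : ℂ} (hu : 0 < u.im) (c : ℝ) : u + c ≠ 0 :=
  ne_of_apply_ne im (by simpa using hu.ne')

end Complex

open Complex in
/-- Let `a > 1` and `β(z) = (a²·z + 1)/(a·(z + 1))`.  If `Im z > 0` and `|z| = a⁻²`,
then `β(a²·z)/β(z)` is a positive real number: there is `r > 0` with
`β(a²·z) = r·β(z)`. -/
theorem stmt_6 (a : ℝ) (ha : 1 < a) (β : ℂ → ℂ)
    (hβ : ∀ z : ℂ, β z = ((a : ℂ) ^ 2 * z + 1) / ((a : ℂ) * (z + 1)))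
    (z : ℂ) (hz : 0 < z.im) (habs : ‖z‖ = (a ^ 2)⁻¹) :
    ∃ r : ℝ, 0 < r ∧ β ((a : ℂ) ^ 2 * z) = (r : ℂ) * β z := by
  have ha0 : (a : ℂ) ≠ 0 := ofReal_ne_zero.2 (by positivity)
  simp only [← ofReal_pow] at hβ ⊢
  set c := a ^ 2 with hc
  set u := (c : ℂ) * z with hu_def
  have hu : ‖u‖ = 1 := by
    rw [norm_mul, norm_real, Real.norm_of_nonneg (by positivity), habs,
      mul_inv_cancel₀ (by positivity)]
  have hu_im : 0 < u.im := by
    rw [hu_def, im_ofReal_mul]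
    positivity
  have hu1 : u + 1 ≠ 0 := by simpa using add_ofReal_ne_zero_of_im_pos hu_im 1
  have huc : u + c ≠ 0 := add_ofReal_ne_zero_of_im_pos hu_im c
  have hβz : β z = a * (u + 1) / (u + c) := by
    have hz1 : z + 1 ≠ 0 := by simpa using add_ofReal_ne_zero_of_im_pos hz 1
    rw [hβ, div_eq_div_iff (mul_ne_zero ha0 hz1) huc, hu_def, hc, ofReal_pow]
    ring
  refine ⟨normSq (u + c) / normSq (u + 1) / c,
    by positivity [normSq_pos.2 hu1, normSq_pos.2 huc], ?_⟩
  calc β u = (c * u + 1) / (u + 1) / a := by rw [hβ, mul_comm (a : ℂ), div_div]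
    _ = (normSq (u + c) / normSq (u + 1) : ℝ) * ((u + 1) / (u + c)) / a := by
      rw [mul_add_one_div_add_one_eq_normSq_div_mul hu hu1 huc]
    _ = (normSq (u + c) / normSq (u + 1) / c : ℝ) * β z := by
      rw [hβz, ofReal_div _ c, hc, ofReal_pow]
      field_simp
end

section
/- Let l ≥ 2 be an integer and let N, M : ℕ → ℤ be as above. Then the sequence of real numbers N(k)/M(k) is strictly increasing in k and converges, as k → ∞, to (l − √(l² − 4))/2 (that is, to a_l⁻¹ where a_l = (l + √(l² − 4))/2). -/
/-! The Casoratian `N (k+1) M k - N k M (k+1)` of two solutions of the recurrence is constant,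
here `1`, so consecutive ratios increase. For the smaller root `α` of `X² - l X + 1`, `α M - N` is
again a solution, with initial values `α, α²`, hence equals `α ^ (k+1)`; as `0 ≤ α ≤ 1` this error
stays bounded while `M k ≥ k + 1`, so `N k / M k → α`. -/

open Filter Topology

section Recurrence

variable {R : Type*} [CommRing R] {l : R} {x y : ℕ → R}

theorem casoratian_eq_of_rec (hx : ∀ k, x (k + 2) = l * x (k + 1) - x k)
    (hy : ∀ k, y (k + 2) = l * y (k + 1) - y k) (k : ℕ) :
    x (k + 1) * y k - x k * y (k + 1) = x 1 * y 0 - x 0 * y 1 := by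
  induction k with
  | zero => rfl
  | succ k ih => rw [hx, hy, ← ih]; ring

theorem eq_mul_pow_of_rec (hx : ∀ k, x (k + 2) = l * x (k + 1) - x k) {α : R}
    (hα : α ^ 2 = l * α - 1) (h1 : x 1 = x 0 * α) (k : ℕ) : x k = x 0 * α ^ k := by
  induction k using Nat.twoStepInduction with
  | zero => simp
  | one => simpa using h1
  | more k ih0 ih1 => rw [hx, ih1, ih0]; linear_combination -(x 0 * α ^ k) * hα

end Recurrence

theorem nonneg_and_lt_succ_of_rec {l : ℤ} {M : ℕ → ℤ} (hl : 2 ≤ l)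
    (hM : ∀ k, M (k + 2) = l * M (k + 1) - M k) (h0 : 0 ≤ M 0) (h01 : M 0 < M 1) (k : ℕ) :
    0 ≤ M k ∧ M k < M (k + 1) := by
  induction k with
  | zero => exact ⟨h0, h01⟩
  | succ k ih => refine ⟨by omega, ?_⟩; rw [hM]; nlinarith

theorem add_le_of_rec {l : ℤ} {M : ℕ → ℤ} (hl : 2 ≤ l)
    (hM : ∀ k, M (k + 2) = l * M (k + 1) - M k) (h0 : 0 ≤ M 0) (h01 : M 0 < M 1) (k : ℕ) :
    M 0 + k ≤ M k := by
  induction k with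
  | zero => simp
  | succ k ih => have := (nonneg_and_lt_succ_of_rec hl hM h0 h01 k).2; push_cast; omega

section SmallRoot

variable {l : ℝ} (hl : 2 ≤ l)
include hl

theorem smallRoot_sq : ((l - √(l ^ 2 - 4)) / 2) ^ 2 = l * ((l - √(l ^ 2 - 4)) / 2) - 1 := by
  have := Real.sq_sqrt (by nlinarith : 0 ≤ l ^ 2 - 4)
  linear_combination this / 4

theorem smallRoot_mem_Icc : (l - √(l ^ 2 - 4)) / 2 ∈ Set.Icc 0 1 := by
  have hsq := Real.sq_sqrt (by nlinarith : 0 ≤ l ^ 2 - 4)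
  have hle : √(l ^ 2 - 4) ≤ l := Real.sqrt_le_iff.2 ⟨by linarith, by linarith⟩
  have hge : l - 2 ≤ √(l ^ 2 - 4) := Real.le_sqrt_of_sq_le (by nlinarith)
  constructor <;> linarith

end SmallRoot

theorem tendsto_div_of_isBoundedUnder_sub {n m : ℕ → ℝ} {α : ℝ} (hm : Tendsto m atTop atTop)
    (hb : IsBoundedUnder (· ≤ ·) atTop fun k => ‖α * m k - n k‖) :
    Tendsto (fun k => n k / m k) atTop (𝓝 α) := by
  have herr : Tendsto (fun k => (m k)⁻¹ * (α * m k - n k)) atTop (𝓝 0) :=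
    hm.inv_tendsto_atTop.zero_mul_isBoundedUnder_le hb
  have hsub := herr.const_sub α
  rw [sub_zero] at hsub
  refine hsub.congr' ?_
  filter_upwards [hm.eventually_ne_atTop 0] with k hk
  field_simp
  ring

/-- Let `l ≥ 2` be an integer and `N, M : ℕ → ℤ` with `N(0) = 0`, `M(0) = 1`,
`N(1) = 1`, `M(1) = l`, `N(k+2) = l·N(k+1) − N(k)`, `M(k+2) = l·M(k+1) − M(k)`.
Then `k ↦ N(k)/M(k)` is strictly increasing and converges to
`(l − √(l² − 4))/2 = a_l⁻¹`. -/
theorem stmt_9 (l : ℤ) (hl : 2 ≤ l) (N M : ℕ → ℤ)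
    (hN0 : N 0 = 0) (hM0 : M 0 = 1) (hN1 : N 1 = 1) (hM1 : M 1 = l)
    (hNrec : ∀ k : ℕ, N (k + 2) = l * N (k + 1) - N k)
    (hMrec : ∀ k : ℕ, M (k + 2) = l * M (k + 1) - M k) :
    StrictMono (fun k : ℕ => (N k : ℝ) / (M k : ℝ)) ∧
    Filter.Tendsto (fun k : ℕ => (N k : ℝ) / (M k : ℝ)) Filter.atTop
      (nhds (((l : ℝ) - Real.sqrt ((l : ℝ) ^ 2 - 4)) / 2)) := by
  have hMge (k : ℕ) : (k : ℝ) + 1 ≤ M k := by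
    have := add_le_of_rec hl hMrec (by omega) (by omega) k
    rw [hM0] at this
    exact_mod_cast (by omega : (k : ℤ) + 1 ≤ M k)
  have hMpos (k : ℕ) : (0 : ℝ) < M k := by linarith [hMge k, k.cast_nonneg (α := ℝ)]
  refine ⟨strictMono_nat_of_lt_succ fun k => ?_, ?_⟩
  · have hcas := casoratian_eq_of_rec hNrec hMrec k
    rw [hN0, hN1, hM0] at hcas
    have : (N (k + 1) : ℝ) * M k - N k * M (k + 1) = 1 := by exact_mod_cast (by simpa using hcas)
    rw [div_lt_div_iff₀ (hMpos k) (hMpos (k + 1))]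
    linarith
  · have hl' : (2 : ℝ) ≤ l := by exact_mod_cast hl
    have hα := smallRoot_sq hl'
    obtain ⟨hα0, hα1⟩ := smallRoot_mem_Icc hl'
    set α := ((l : ℝ) - √((l : ℝ) ^ 2 - 4)) / 2
    have herr := eq_mul_pow_of_rec (x := fun k => α * (M k : ℝ) - N k)
      (fun k => by push_cast [hMrec, hNrec]; ring) hα
      (by simp only [hM0, hN0, hM1, hN1]; push_cast; linear_combination -hα)
    refine tendsto_div_of_isBoundedUnder_sub
      (tendsto_atTop_mono (fun k => (hMge k).trans' (by linarith)) tendsto_natCast_atTop_atTop)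
      (isBoundedUnder_of ⟨1, fun k => ?_⟩)
    simp only [herr, hM0, hN0, Int.cast_one, Int.cast_zero, mul_one, sub_zero, norm_mul,
      norm_pow, Real.norm_of_nonneg hα0]
    exact mul_le_one₀ hα1 (pow_nonneg hα0 _) (pow_le_one₀ hα0 hα1)
end

section
/- Let r₁, r₂ > 0 and 0 < φ₂ < φ₁ ≤ π be real numbers, and define f : [0, ∞) → ℝ by f(t) = arccos((t·r₁·cos φ₁ + r₂·cos φ₂)/√(t²·r₁² + r₂² + 2·t·r₁·r₂·cos(φ₁ − φ₂))). Then f is strictly increasing on [0, ∞), f(0) = φ₂, φ₂ ≤ f(t) < φ₁ for every t ≥ 0, and f(t) → φ₁ as t → ∞. -/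
/-!
For `t ≥ 0`, `f t` is the argument of `w t = t z₁ + z₂` with `zᵢ = rᵢ e^{iφᵢ}`: the radicand is
`|w t|²` by the law of cosines, and `w t` lies in the upper half-plane, where
`arg = arccos (re / |·|)`. Since `Im (conj (w s) * w t) = (t - s) r₁ r₂ sin (φ₁ - φ₂) > 0`, the point
`w t` turns counterclockwise, so `f` increases, and for the same reason stays below `arg z₁ = φ₁`.
Finally `w t / t → z₁` inside the closed upper half-plane, on which `arg` is continuous at every
nonzero point, also on the negative real axis (the case `φ₁ = π`).
-/

open Real
open Complex (arg)
open ComplexConjugate Filter Topology Set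

namespace Complex

theorem arg_mk_mul_cos_mul_sin {r θ : ℝ} (hr : 0 < r) (hθ : θ ∈ Ioc (-π) π) :
    arg ⟨r * Real.cos θ, r * Real.sin θ⟩ = θ := by
  convert arg_mul_cos_add_sin_mul_I hr hθ using 2
  apply Complex.ext <;> simp [← ofReal_cos, ← ofReal_sin]

theorem arg_eq_arccos_of_im_pos {z : ℂ} (hz : 0 < z.im) :
    arg z = arccos (z.re / √(z.re ^ 2 + z.im ^ 2)) := by
  rw [arg_of_im_nonneg_of_ne_zero hz.le (fun h => hz.ne' (by simp [h])), norm_def, normSq_apply,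
    sq, sq]

theorem arg_lt_arg_of_im_conj_mul_pos {z w : ℂ} (hw : 0 ≤ w.im) (h : 0 < (conj z * w).im) :
    arg z < arg w := by
  have hz : z ≠ 0 := by rintro rfl; simp at h
  have hw₀ : w ≠ 0 := by rintro rfl; simp at h
  have hsin : 0 < Real.sin (arg w - arg z) := by
    rw [Real.sin_sub, sin_arg, sin_arg, cos_arg hz, cos_arg hw₀]
    have : (conj z * w).im = z.re * w.im - z.im * w.re := by
      simp only [mul_im, conj_re, conj_im]; ring
    have hpos : 0 < ‖z‖ * ‖w‖ := by positivity
    calc 0 < (conj z * w).im / (‖z‖ * ‖w‖) := div_pos h hpos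
      _ = _ := by rw [this]; field_simp
  by_contra! hle
  have := sin_nonpos_of_nonpos_of_neg_pi_le (sub_nonpos.2 hle)
    (by linarith [arg_nonneg_iff.2 hw, arg_le_pi z])
  linarith

theorem continuousWithinAt_arg_im_nonneg {z : ℂ} (hz : z ≠ 0) :
    ContinuousWithinAt arg {w | 0 ≤ w.im} z := by
  by_cases hs : z ∈ slitPlane
  · exact (continuousAt_arg hs).continuousWithinAt
  · rw [mem_slitPlane_iff, not_or, not_lt, not_not] at hs
    exact continuousWithinAt_arg_of_re_neg_of_im_zero
      (hs.1.lt_of_ne fun h => hz (Complex.ext h hs.2)) hs.2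

theorem im_conj_mul_add_mul {z₁ z₂ : ℂ} (s t : ℝ) :
    (conj (s * z₁ + z₂) * (t * z₁ + z₂)).im = (t - s) * (conj z₂ * z₁).im := by
  simp only [map_add, map_mul, conj_ofReal, mul_im, mul_re, add_re, add_im, ofReal_re, ofReal_im,
    conj_re, conj_im]
  ring

theorem strictMonoOn_arg_mul_add {z₁ z₂ : ℂ} (h₁ : 0 ≤ z₁.im) (h₂ : 0 ≤ z₂.im)
    (h : 0 < (conj z₂ * z₁).im) : StrictMonoOn (fun t : ℝ => arg (t * z₁ + z₂)) (Ici 0) := by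
  intro s _ t ht hst
  refine arg_lt_arg_of_im_conj_mul_pos ?_ ?_
  · simp only [add_im, im_ofReal_mul]
    exact add_nonneg (mul_nonneg ht h₁) h₂
  · rw [im_conj_mul_add_mul]
    exact mul_pos (sub_pos.2 hst) h

theorem tendsto_arg_mul_add_atTop {z₁ z₂ : ℂ} (hz₁ : z₁ ≠ 0) (h₁ : 0 ≤ z₁.im) (h₂ : 0 ≤ z₂.im) :
    Tendsto (fun t : ℝ => arg (t * z₁ + z₂)) atTop (𝓝 (arg z₁)) := by
  have hlim : Tendsto (fun t : ℝ => z₁ + (t⁻¹ : ℝ) * z₂) atTop (𝓝[{w | 0 ≤ w.im}] z₁) := by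
    refine tendsto_nhdsWithin_iff.2 ⟨?_, ?_⟩
    · simpa using tendsto_const_nhds.add
        (((continuous_ofReal.tendsto 0).comp tendsto_inv_atTop_zero).mul_const z₂)
    · filter_upwards [eventually_gt_atTop 0] with t ht
      simp only [add_im, im_ofReal_mul]
      positivity
  refine ((continuousWithinAt_arg_im_nonneg hz₁).tendsto.comp hlim).congr' ?_
  filter_upwards [eventually_gt_atTop 0] with t ht
  have ht' : (t : ℂ) ≠ 0 := ofReal_ne_zero.2 ht.ne'
  rw [Function.comp_apply, ← arg_real_mul _ ht]
  congr 1
  push_cast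
  field_simp

end Complex

/-- Let `r₁, r₂ > 0` and `0 < φ₂ < φ₁ ≤ π`, and let
`f(t) = arccos((t·r₁·cos φ₁ + r₂·cos φ₂)/√(t²·r₁² + r₂² + 2·t·r₁·r₂·cos(φ₁ − φ₂)))`.
Then `f` is strictly increasing on `[0, ∞)`, `f(0) = φ₂`, `φ₂ ≤ f(t) < φ₁` for all
`t ≥ 0`, and `f(t) → φ₁` as `t → ∞`. -/
theorem stmt_10 (r₁ r₂ φ₁ φ₂ : ℝ) (hr₁ : 0 < r₁) (hr₂ : 0 < r₂)
    (hφ₂ : 0 < φ₂) (hφ : φ₂ < φ₁) (hφ₁ : φ₁ ≤ π)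
    (f : ℝ → ℝ)
    (hf : ∀ t : ℝ, f t = Real.arccos ((t * r₁ * Real.cos φ₁ + r₂ * Real.cos φ₂) /
      Real.sqrt (t ^ 2 * r₁ ^ 2 + r₂ ^ 2 + 2 * t * r₁ * r₂ * Real.cos (φ₁ - φ₂)))) :
    StrictMonoOn f (Set.Ici (0 : ℝ)) ∧ f 0 = φ₂ ∧
    (∀ t : ℝ, 0 ≤ t → φ₂ ≤ f t ∧ f t < φ₁) ∧
    Filter.Tendsto f Filter.atTop (nhds φ₁) := by
  set z₁ : ℂ := ⟨r₁ * cos φ₁, r₁ * sin φ₁⟩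
  set z₂ : ℂ := ⟨r₂ * cos φ₂, r₂ * sin φ₂⟩
  have hφ₂π : φ₂ < π := hφ.trans_le hφ₁
  have harg₁ : arg z₁ = φ₁ := Complex.arg_mk_mul_cos_mul_sin hr₁ ⟨by linarith, hφ₁⟩
  have harg₂ : arg z₂ = φ₂ := Complex.arg_mk_mul_cos_mul_sin hr₂ ⟨by linarith, hφ₂π.le⟩
  have him₁ : 0 ≤ z₁.im := mul_nonneg hr₁.le (sin_nonneg_of_nonneg_of_le_pi (by linarith) hφ₁)
  have him₂ : 0 < z₂.im := mul_pos hr₂ (sin_pos_of_pos_of_lt_pi hφ₂ hφ₂π)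
  have hcross : 0 < (conj z₂ * z₁).im := by
    have : (conj z₂ * z₁).im = r₁ * r₂ * sin (φ₁ - φ₂) := by
      simp only [Complex.mul_im, Complex.conj_re, Complex.conj_im, sin_sub, z₁, z₂]; ring
    rw [this]
    exact mul_pos (mul_pos hr₁ hr₂) (sin_pos_of_pos_of_lt_pi (by linarith) (by linarith))
  have hf_arg : EqOn (fun t : ℝ => arg (t * z₁ + z₂)) f (Ici 0) := by
    intro t (ht : 0 ≤ t)
    dsimp only
    have him : 0 < (t * z₁ + z₂).im := by
      simp only [Complex.add_im, Complex.im_ofReal_mul]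
      exact add_pos_of_nonneg_of_pos (mul_nonneg ht him₁) him₂
    have hcos_law : t ^ 2 * r₁ ^ 2 + r₂ ^ 2 + 2 * t * r₁ * r₂ * cos (φ₁ - φ₂)
        = (t * z₁ + z₂).re ^ 2 + (t * z₁ + z₂).im ^ 2 := by
      simp only [Complex.add_re, Complex.add_im, Complex.re_ofReal_mul, Complex.im_ofReal_mul,
        z₁, z₂, cos_sub]
      linear_combination (-(t ^ 2 * r₁ ^ 2)) * sin_sq_add_cos_sq φ₁ - r₂ ^ 2 * sin_sq_add_cos_sq φ₂
    rw [hf, hcos_law, Complex.arg_eq_arccos_of_im_pos him]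
    simp [z₁, z₂, mul_assoc]
  have hmono := Complex.strictMonoOn_arg_mul_add him₁ him₂.le hcross
  have hf0 : f 0 = φ₂ := by simpa [harg₂] using (hf_arg (self_mem_Ici : (0:ℝ) ∈ Ici 0)).symm
  refine ⟨hmono.congr hf_arg, hf0, fun t ht => ⟨?_, ?_⟩, ?_⟩
  · rw [← hf0, ← hf_arg ht, ← hf_arg self_mem_Ici]
    exact hmono.monotoneOn self_mem_Ici ht ht
  · rw [← hf_arg ht, ← harg₁]
    refine Complex.arg_lt_arg_of_im_conj_mul_pos him₁ ?_
    have : (conj (t * z₁ + z₂) * z₁).im = (conj z₂ * z₁).im := by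
      simp only [map_add, map_mul, Complex.conj_ofReal, Complex.mul_im, Complex.add_re,
        Complex.add_im, Complex.mul_re, Complex.ofReal_re, Complex.ofReal_im, Complex.conj_re,
        Complex.conj_im]
      ring
    rwa [this]
  · rw [← harg₁]
    refine (Complex.tendsto_arg_mul_add_atTop ?_ him₁ him₂.le).congr' ?_
    · rintro h
      rw [h, Complex.arg_zero] at harg₁
      linarith
    · filter_upwards [eventually_ge_atTop 0] with t ht using hf_arg ht
end

section
/- Let a ≥ 1 be real. For all x > 0 and y ∈ (−1, 1): F(x, y, a) − F(x, y, a⁻¹) ≤ F(1, y, a) − F(1, y, a⁻¹). -/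
open Real

/-- Comparison of angles in `(0, π)` via cotangents. -/
lemma cot_cmp {A B : ℝ} (hA : A ∈ Set.Ioo 0 π) (hB : B ∈ Set.Ioo 0 π)
    (h : Real.cos B / Real.sin B ≤ Real.cos A / Real.sin A) : A ≤ B := by
  by_contra hlt
  push_neg at hlt
  have hAm : π / 2 - A ∈ Set.Ioo (-(π / 2)) (π / 2) := by
    constructor <;> [linarith [hA.2]; linarith [hA.1]]
  have hBm : π / 2 - B ∈ Set.Ioo (-(π / 2)) (π / 2) := by
    constructor <;> [linarith [hB.2]; linarith [hB.1]]
  have htan : Real.tan (π / 2 - A) < Real.tan (π / 2 - B) :=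
    Real.strictMonoOn_tan hAm hBm (by linarith)
  rw [Real.tan_eq_sin_div_cos, Real.tan_eq_sin_div_cos, Real.sin_pi_div_two_sub,
    Real.cos_pi_div_two_sub, Real.sin_pi_div_two_sub, Real.cos_pi_div_two_sub] at htan
  linarith

lemma F_facts (x y t : ℝ) (hx : 0 < x) (ht : 0 < t) (hy1 : -1 < y) (hy2 : y < 1) :
    F x y t ∈ Set.Ioo 0 π ∧
    Real.cos (F x y t) * Real.sqrt (t ^ 2 + x ^ 2 - 2 * t * x * y) = x * y - t ∧
    Real.sin (F x y t) * Real.sqrt (t ^ 2 + x ^ 2 - 2 * t * x * y)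
      = x * Real.sqrt (1 - y ^ 2) := by
  have hE : 0 < t ^ 2 + x ^ 2 - 2 * t * x * y := by
    nlinarith [sq_nonneg (t - x), mul_pos (mul_pos ht hx) (show (0:ℝ) < 1 - y by linarith)]
  set r := Real.sqrt (t ^ 2 + x ^ 2 - 2 * t * x * y) with hr
  have hrpos : 0 < r := Real.sqrt_pos.2 hE
  have hr2 : r ^ 2 = t ^ 2 + x ^ 2 - 2 * t * x * y := Real.sq_sqrt hE.le
  have hs2 : (Real.sqrt (1 - y ^ 2)) ^ 2 = 1 - y ^ 2 := Real.sq_sqrt (by nlinarith)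
  have hspos : 0 < Real.sqrt (1 - y ^ 2) := Real.sqrt_pos.2 (by nlinarith)
  set u := (x * y - t) / r with hu
  have habs : |x * y - t| ≤ r := by
    rw [abs_le]
    constructor <;> nlinarith [Real.sqrt_nonneg (t ^ 2 + x ^ 2 - 2 * t * x * y)]
  have hu1 : -1 ≤ u := by
    rw [hu, le_div_iff₀ hrpos]
    have := (abs_le.1 habs).1; linarith
  have hu2 : u ≤ 1 := by
    rw [hu, div_le_iff₀ hrpos]
    have := (abs_le.1 habs).2; linarith
  have hcos : Real.cos (F x y t) = u := Real.cos_arccos hu1 hu2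
  have hsin : Real.sin (F x y t) = x * Real.sqrt (1 - y ^ 2) / r := by
    rw [show F x y t = Real.arccos u from rfl, Real.sin_arccos]
    rw [show 1 - u ^ 2 = (x * Real.sqrt (1 - y ^ 2) / r) ^ 2 by
      rw [hu]; field_simp; nlinarith]
    exact Real.sqrt_sq (by positivity)
  have hsinpos : 0 < Real.sin (F x y t) := by
    rw [hsin]; positivity
  refine ⟨⟨?_, ?_⟩, ?_, ?_⟩
  · rcases lt_or_eq_of_le (Real.arccos_nonneg u) with h | h
    · exact h
    · exfalso; rw [show F x y t = Real.arccos u from rfl, ← h, Real.sin_zero] at hsinpos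
      exact lt_irrefl 0 hsinpos
  · rcases lt_or_eq_of_le (Real.arccos_le_pi u) with h | h
    · exact h
    · exfalso; rw [show F x y t = Real.arccos u from rfl, h, Real.sin_pi] at hsinpos
      exact lt_irrefl 0 hsinpos
  · rw [hcos, hu]; exact div_mul_cancel₀ _ hrpos.ne'
  · rw [hsin]; exact div_mul_cancel₀ _ hrpos.ne'

set_option maxHeartbeats 1600000

/-- Let `a ≥ 1`.  For all `x > 0` and `y ∈ (−1, 1)`:
`F(x, y, a) − F(x, y, a⁻¹) ≤ F(1, y, a) − F(1, y, a⁻¹)`. -/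
theorem stmt_13 (a : ℝ) (ha : 1 ≤ a) (x y : ℝ) (hx : 0 < x)
    (hy : y ∈ Set.Ioo (-1 : ℝ) 1) :
    F x y a - F x y a⁻¹ ≤ F 1 y a - F 1 y a⁻¹ := by
  obtain ⟨hy1, hy2⟩ := hy
  rcases eq_or_lt_of_le ha with rfl | ha1
  · norm_num
  have ha0 : (0 : ℝ) < a := by linarith
  have hb0 : (0 : ℝ) < a⁻¹ := by positivity
  have hb1 : a⁻¹ < 1 := by
    rw [inv_lt_one_iff₀]; right; exact ha1
  have hd : 0 < a - a⁻¹ := by linarith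
  set s := Real.sqrt (1 - y ^ 2) with hs
  have hspos : 0 < s := Real.sqrt_pos.2 (by nlinarith)
  have hs2 : s ^ 2 = 1 - y ^ 2 := Real.sq_sqrt (by nlinarith)
  -- facts at generic point z > 0
  have key : ∀ z : ℝ, 0 < z →
      F z y a - F z y a⁻¹ ∈ Set.Ioo 0 π ∧
      Real.cos (F z y a - F z y a⁻¹) / Real.sin (F z y a - F z y a⁻¹)
        = (z ^ 2 + 1 - z * y * (a + a⁻¹)) / (z * s * (a - a⁻¹)) := by
    intro z hz
    obtain ⟨hFa_mem, hca, hsa⟩ := F_facts z y a hz ha0 hy1 hy2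
    obtain ⟨hFb_mem, hcb, hsb⟩ := F_facts z y a⁻¹ hz hb0 hy1 hy2
    set ra := Real.sqrt (a ^ 2 + z ^ 2 - 2 * a * z * y) with hra
    set rb := Real.sqrt (a⁻¹ ^ 2 + z ^ 2 - 2 * a⁻¹ * z * y) with hrb
    have hrapos : 0 < ra := Real.sqrt_pos.2 (by
      nlinarith [sq_nonneg (a - z), mul_pos (mul_pos ha0 hz) (show (0:ℝ) < 1 - y by linarith)])
    have hrbpos : 0 < rb := Real.sqrt_pos.2 (by
      nlinarith [sq_nonneg (a⁻¹ - z), mul_pos (mul_pos hb0 hz) (show (0:ℝ) < 1 - y by linarith)])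
    set δ := F z y a - F z y a⁻¹ with hδ
    have hab : a * a⁻¹ = 1 := mul_inv_cancel₀ (ne_of_gt ha0)
    have hcosδ : Real.cos δ * (ra * rb) = z ^ 2 + 1 - z * y * (a + a⁻¹) := by
      rw [hδ, Real.cos_sub]
      have : (Real.cos (F z y a) * Real.cos (F z y a⁻¹)
          + Real.sin (F z y a) * Real.sin (F z y a⁻¹)) * (ra * rb)
          = (Real.cos (F z y a) * ra) * (Real.cos (F z y a⁻¹) * rb)
          + (Real.sin (F z y a) * ra) * (Real.sin (F z y a⁻¹) * rb) := by ring
      rw [this, hca, hcb, hsa, hsb]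
      have hss : Real.sqrt (1 - y ^ 2) * Real.sqrt (1 - y ^ 2) = 1 - y ^ 2 :=
        Real.mul_self_sqrt (by nlinarith)
      linear_combination hab + z ^ 2 * hss
    have hsinδ : Real.sin δ * (ra * rb) = z * s * (a - a⁻¹) := by
      rw [hδ, Real.sin_sub]
      have : (Real.sin (F z y a) * Real.cos (F z y a⁻¹)
          - Real.cos (F z y a) * Real.sin (F z y a⁻¹)) * (ra * rb)
          = (Real.sin (F z y a) * ra) * (Real.cos (F z y a⁻¹) * rb)
          - (Real.cos (F z y a) * ra) * (Real.sin (F z y a⁻¹) * rb) := by ring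
      rw [this, hca, hcb, hsa, hsb]
      ring
    have hP : 0 < ra * rb := mul_pos hrapos hrbpos
    have hsinδpos : 0 < Real.sin δ := by
      have h1 : 0 < z * s * (a - a⁻¹) := by positivity
      rw [← hsinδ] at h1
      nlinarith
    have hmem : δ ∈ Set.Ioo 0 π := by
      constructor
      · by_contra h
        push_neg at h
        have hge : -π ≤ δ := by
          have := hFa_mem.1
          have := hFb_mem.2
          rw [hδ]; linarith
        have := Real.sin_nonpos_of_nonpos_of_neg_pi_le h hge
        linarith
      · have := hFa_mem.2
        have := hFb_mem.1
        rw [hδ]; linarith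
    refine ⟨hmem, ?_⟩
    have h1 : Real.cos δ = (z ^ 2 + 1 - z * y * (a + a⁻¹)) / (ra * rb) := by
      rw [eq_div_iff hP.ne']; exact hcosδ
    have h2 : Real.sin δ = z * s * (a - a⁻¹) / (ra * rb) := by
      rw [eq_div_iff hP.ne']
      rw [hsinδ, hs]
    rw [h1, h2]
    rw [div_div_div_cancel_right₀]
    exact hP.ne'
  obtain ⟨hmx, hqx⟩ := key x hx
  obtain ⟨hm1, hq1⟩ := key 1 one_pos
  apply cot_cmp hmx hm1
  rw [hqx, hq1]
  rw [div_le_div_iff₀ (by positivity) (by positivity)]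
  nlinarith [sq_nonneg (x - 1), mul_pos hspos hd, mul_pos (mul_pos hspos hd) hx]
end

section
/- Let l ≥ 2 be an integer and ε ∈ (0, 1). Then the supremum of the set { F(x, y, a_l) − F(x, y, a_l⁻¹) : x ∈ (0, ∞), y ∈ (−1, cos(πε)) } equals K_ε(l). -/
open Real

/-- `a_l = (l + √(l² − 4))/2`. -/
noncomputable def al (l : ℝ) : ℝ := (l + Real.sqrt (l ^ 2 - 4)) / 2

/-- `K_ε(l)`, the ε-norm of the derived category of the `l`-Kronecker quiver. -/
noncomputable def Keps (ε l : ℝ) : ℝ :=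
  Real.arccos ((Real.cos (π * ε) - al l) /
      Real.sqrt ((al l) ^ 2 + 1 - 2 * al l * Real.cos (π * ε))) -
    Real.arccos ((al l * Real.cos (π * ε) - 1) /
      Real.sqrt ((al l) ^ 2 + 1 - 2 * al l * Real.cos (π * ε)))

/-!
With `z = x·e^{iθ}` and `cos θ = y`, `F x y t = arg (z - t)`, so `F x y a - F x y b` is the angle
`arg ((z - a) * conj (z - b))` under which the segment `[b, a]` is seen from `z`. For `b = a⁻¹`
its cotangent is `(x + x⁻¹ - (a + a⁻¹) y) / ((a - a⁻¹) √(1 - y²))`, which is smallest at `x = 1`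
and decreases in `y`. So the angle increases towards its value at `z = e^{iπε}`, which is `K_ε(l)`,
without reaching it.
-/

open Complex ComplexConjugate in
theorem Complex.arg_sub_arg_eq_arg_mul_conj {u v : ℂ} (hu : 0 < u.im) (hv : 0 < v.im) :
    arg u - arg v = arg (u * conj v) := by
  have hv_lt_pi : arg v < π := arg_lt_pi_iff.2 (Or.inr hv.ne')
  have hu₀ : 0 ≤ arg u := arg_nonneg_iff.2 hu.le
  have hv₀ : 0 ≤ arg v := arg_nonneg_iff.2 hv.le
  have hu_ne : u ≠ 0 := fun h => hu.ne' (by simp [h])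
  have hv_ne : conj v ≠ 0 := (map_ne_zero _).2 fun h => hv.ne' (by simp [h])
  rw [arg_mul hu_ne hv_ne, arg_conj, if_neg hv_lt_pi.ne, sub_eq_add_neg]
  rw [arg_conj, if_neg hv_lt_pi.ne]
  exact ⟨by linarith, by linarith [arg_le_pi u]⟩

theorem Complex.arg_eq_pi_div_two_sub_arctan {w : ℂ} (hw : 0 < w.im) :
    arg w = π / 2 - Real.arctan (w.re / w.im) := by
  have hw0 : w ≠ 0 := fun h => hw.ne' (by simp [h])
  have h0 : 0 < arg w :=
    (arg_nonneg_iff.2 hw.le).lt_of_ne' fun h => hw.ne' (arg_eq_zero_iff.1 h).2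
  have hπ : arg w < π := arg_lt_pi_iff.2 (Or.inr hw.ne')
  have htan : Real.tan (π / 2 - arg w) = w.re / w.im := by
    rw [Real.tan_pi_div_two_sub, Real.tan_eq_sin_div_cos, sin_arg, cos_arg hw0, inv_div,
      div_div_div_cancel_right₀ (norm_ne_zero_iff.2 hw0)]
  rw [← htan, Real.arctan_tan (by linarith) (by linarith)]
  ring

theorem F_mul_mul {k : ℝ} (hk : 0 < k) (x y t : ℝ) : F (k * x) y (k * t) = F x y t := by
  have hrad : (k * t) ^ 2 + (k * x) ^ 2 - 2 * (k * t) * (k * x) * y =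
      k ^ 2 * (t ^ 2 + x ^ 2 - 2 * t * x * y) := by ring
  rw [F, F, hrad, sqrt_mul (sq_nonneg k), sqrt_sq hk.le, mul_assoc, ← mul_sub,
    mul_div_mul_left _ _ hk.ne']

theorem F_eq_arg (t : ℝ) {x y : ℝ} (hx : 0 < x) (hy : y ^ 2 < 1) :
    F x y t = Complex.arg ⟨x * y - t, x * √(1 - y ^ 2)⟩ := by
  have hs : 0 < √(1 - y ^ 2) := sqrt_pos.2 (by linarith)
  rw [Complex.arg_of_im_pos (mul_pos hx hs), F, Complex.norm_def, Complex.normSq_mk]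
  congr 3
  linear_combination -x ^ 2 * sq_sqrt (by linarith : (0:ℝ) ≤ 1 - y ^ 2)

theorem F_sub_F_eq {a b x y : ℝ} (hba : b < a) (hx : 0 < x) (hy : y ^ 2 < 1) :
    F x y a - F x y b =
      π / 2 - arctan ((x ^ 2 - (a + b) * x * y + a * b) / ((a - b) * x * √(1 - y ^ 2))) := by
  have hs : 0 < √(1 - y ^ 2) := sqrt_pos.2 (by linarith)
  have him : 0 < x * √(1 - y ^ 2) := mul_pos hx hs
  rw [F_eq_arg a hx hy, F_eq_arg b hx hy, Complex.arg_sub_arg_eq_arg_mul_conj him him,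
    Complex.arg_eq_pi_div_two_sub_arctan]
  · congr 3
    · simp only [Complex.mul_re, Complex.conj_re, Complex.conj_im]
      linear_combination x ^ 2 * sq_sqrt (by linarith : (0:ℝ) ≤ 1 - y ^ 2)
    · simp only [Complex.mul_im, Complex.conj_re, Complex.conj_im]
      ring
  · simp only [Complex.mul_im, Complex.conj_re, Complex.conj_im]
    nlinarith

theorem antitoneOn_two_sub_mul_div_sqrt {L : ℝ} (hL : 2 ≤ L) :
    AntitoneOn (fun y => (2 - L * y) / √(1 - y ^ 2)) (Set.Ioo (-1) 1) := by
  intro y ⟨hy₁, hy₂⟩ c ⟨hc₁, hc₂⟩ hyc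
  have hy : 0 < 1 - y ^ 2 := by nlinarith
  have hc : 0 < 1 - c ^ 2 := by nlinarith
  have hsy := sqrt_pos.2 hy
  have hsc := sqrt_pos.2 hc
  show (2 - L * c) / √(1 - c ^ 2) ≤ (2 - L * y) / √(1 - y ^ 2)
  rw [div_le_div_iff₀ hsc hsy]
  rcases le_or_gt (2 - L * c) 0 with hLc | hLc
  · rcases le_or_gt 0 (2 - L * y) with hLy | hLy
    · exact (mul_nonpos_of_nonpos_of_nonneg hLc hsy.le).trans (mul_nonneg hLy hsc.le)
    · have hsyc : √(1 - c ^ 2) ≤ √(1 - y ^ 2) := sqrt_le_sqrt (by nlinarith)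
      calc (2 - L * c) * √(1 - y ^ 2) ≤ (2 - L * y) * √(1 - y ^ 2) := by gcongr
        _ ≤ (2 - L * y) * √(1 - c ^ 2) := mul_le_mul_of_nonpos_left hsyc hLy.le
  · have hLy : 0 < 2 - L * y := by nlinarith
    refine le_of_pow_le_pow_left₀ two_ne_zero (by positivity) ?_
    rw [mul_pow, mul_pow, sq_sqrt hy.le, sq_sqrt hc.le]
    have hfactor : (2 - L * y) ^ 2 * (1 - c ^ 2) - (2 - L * c) ^ 2 * (1 - y ^ 2) =
        (c - y) * ((c - y) * ((L - 2 * c) ^ 2 + 4 * (1 - c ^ 2)) +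
          2 * (2 - L * c) * (L - 2 * c)) := by ring
    have hcy : 0 ≤ c - y := sub_nonneg.2 hyc
    have hLc' : 0 ≤ L - 2 * c := by linarith
    rw [← sub_nonneg, hfactor]
    positivity

theorem F_sub_F_inv_le {a x y c : ℝ} (ha : 1 ≤ a) (hx : 0 < x) (hy : -1 < y) (hyc : y ≤ c)
    (hc : c < 1) : F x y a - F x y a⁻¹ ≤ F 1 c a - F 1 c a⁻¹ := by
  rcases ha.eq_or_lt with rfl | ha
  · simp
  have ha₀ : 0 < a := one_pos.trans ha
  have hinv : a⁻¹ < a := (inv_lt_one_of_one_lt₀ ha).trans ha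
  have hL : 2 ≤ a + a⁻¹ := by
    have : a + a⁻¹ - 2 = (a - 1) ^ 2 / a := by field_simp; ring
    linarith [div_nonneg (sq_nonneg (a - 1)) ha₀.le]
  have hy' : y ^ 2 < 1 := by nlinarith
  have hc' : c ^ 2 < 1 := by nlinarith
  have hsy : 0 < √(1 - y ^ 2) := sqrt_pos.2 (by linarith)
  rw [F_sub_F_eq hinv hx hy', F_sub_F_eq hinv one_pos hc', mul_inv_cancel₀ ha₀.ne']
  gcongr ?_ - ?_
  refine arctan_strictMono.monotone ?_
  have hmono : (2 - (a + a⁻¹) * c) / √(1 - c ^ 2) ≤ (2 - (a + a⁻¹) * y) / √(1 - y ^ 2) :=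
    antitoneOn_two_sub_mul_div_sqrt hL ⟨hy, hyc.trans_lt hc⟩ ⟨by linarith, hc⟩ hyc
  have hx_min : (2 - (a + a⁻¹) * y) / √(1 - y ^ 2) ≤
      (x ^ 2 - (a + a⁻¹) * x * y + 1) / (x * √(1 - y ^ 2)) := by
    rw [div_le_div_iff₀ hsy (by positivity)]
    nlinarith [sq_nonneg (x - 1)]
  calc (1 ^ 2 - (a + a⁻¹) * 1 * c + 1) / ((a - a⁻¹) * 1 * √(1 - c ^ 2))
      = (2 - (a + a⁻¹) * c) / √(1 - c ^ 2) / (a - a⁻¹) := by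
        field_simp
        ring
    _ ≤ (x ^ 2 - (a + a⁻¹) * x * y + 1) / (x * √(1 - y ^ 2)) / (a - a⁻¹) :=
        div_le_div_of_nonneg_right (hmono.trans hx_min) (sub_pos.2 hinv).le
    _ = (x ^ 2 - (a + a⁻¹) * x * y + 1) / ((a - a⁻¹) * x * √(1 - y ^ 2)) := by
        field_simp

theorem continuousAt_F {x y t : ℝ} (ht : t ≠ 0) (hy : y ^ 2 < 1) :
    ContinuousAt (fun y' => F x y' t) y := by
  have hrad : 0 < t ^ 2 + x ^ 2 - 2 * t * x * y := by
    nlinarith [sq_nonneg (x - t * y), mul_pos (sq_pos_of_ne_zero ht) (sub_pos.2 hy)]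
  have hsqrt : ContinuousAt (fun y' => √(t ^ 2 + x ^ 2 - 2 * t * x * y')) y :=
    continuous_sqrt.continuousAt.comp (by fun_prop)
  exact continuous_arccos.continuousAt.comp
    (ContinuousAt.div (by fun_prop) hsqrt (sqrt_pos.2 hrad).ne')

theorem isLUB_F_sub_F_inv {a c : ℝ} (ha : 1 ≤ a) (hc₁ : -1 < c) (hc₂ : c < 1) :
    IsLUB {v : ℝ | ∃ x : ℝ, 0 < x ∧ ∃ y ∈ Set.Ioo (-1 : ℝ) c, v = F x y a - F x y a⁻¹}
      (F 1 c a - F 1 c a⁻¹) := by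
  have ha₀ : 0 < a := one_pos.trans_le ha
  refine ⟨?_, fun M hM => ?_⟩
  · rintro v ⟨x, hx, y, ⟨hy, hyc⟩, rfl⟩
    exact F_sub_F_inv_le ha hx hy hyc.le hc₂
  · have hc : c ^ 2 < 1 := by nlinarith
    have hcont := (continuousAt_F (x := 1) ha₀.ne' hc).sub
      (continuousAt_F (x := 1) (inv_ne_zero ha₀.ne') hc)
    refine le_of_tendsto (hcont.tendsto.mono_left (nhdsWithin_le_nhds (s := Set.Iio c))) ?_
    filter_upwards [Ioo_mem_nhdsLT hc₁] with y hy
    exact hM ⟨1, one_pos, y, hy, rfl⟩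

theorem one_le_al {l : ℝ} (hl : 2 ≤ l) : 1 ≤ al l := by
  have := sqrt_nonneg (l ^ 2 - 4)
  unfold al
  linarith

theorem Keps_eq {ε l : ℝ} (hl : 0 < al l) :
    Keps ε l = F 1 (cos (π * ε)) (al l) - F 1 (cos (π * ε)) (al l)⁻¹ := by
  have hinv : F 1 (cos (π * ε)) (al l)⁻¹ = F (al l) (cos (π * ε)) 1 := by
    rw [← F_mul_mul hl, mul_one, mul_inv_cancel₀ hl.ne']
  rw [hinv, Keps, F, F]
  congr 4 <;> ring

/-- For an integer `l ≥ 2` and `ε ∈ (0, 1)`, the supremum of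
`{F(x, y, a_l) − F(x, y, a_l⁻¹) : x ∈ (0, ∞), y ∈ (−1, cos(πε))}` equals `K_ε(l)`. -/
theorem stmt_14 (l : ℤ) (hl : 2 ≤ l) (ε : ℝ) (hε : ε ∈ Set.Ioo (0 : ℝ) 1) :
    IsLUB {v : ℝ | ∃ x : ℝ, 0 < x ∧ ∃ y ∈ Set.Ioo (-1 : ℝ) (Real.cos (π * ε)),
      v = F x y (al (l : ℝ)) - F x y (al (l : ℝ))⁻¹} (Keps ε (l : ℝ)) := by
  obtain ⟨hε₀, hε₁⟩ := hε
  have ha : 1 ≤ al l := one_le_al (by exact_mod_cast hl)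
  have hπε : 0 < π * ε := mul_pos pi_pos hε₀
  have hπε' : π * ε < π := mul_lt_of_lt_one_right pi_pos hε₁
  have hc₁ : -1 < cos (π * ε) := by
    simpa using cos_lt_cos_of_nonneg_of_le_pi hπε.le le_rfl hπε'
  have hc₂ : cos (π * ε) < 1 := by
    simpa using cos_lt_cos_of_nonneg_of_le_pi le_rfl hπε'.le hπε
  rw [Keps_eq (one_pos.trans_le ha)]
  exact isLUB_F_sub_F_inv ha hc₁ hc₂
end
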